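/- Scaled one-sided HLLC positivity (Lemma 2.10): for any parameters ζ₁, ζ₂, ζ₃, ζ₄ > 0, any two admissible states U₀, U₁ ∈ G, and any λ > 0 satisfying λ · max{α_max(U₀), α_max(U₁)} ≤ 1, one has ζ₂U₁ − λ(F(ζ₂U₁) − F^hllc(ζ₁U₀, ζ₂U₁)) ∈ G and ζ₃U₀ − λ(F^hllc(ζ₃U₀, ζ₄U₁) − F(ζ₃U₀)) ∈ G. -/

import Mathlib

noncomputable section

/-- A 1D state `U = (ρ, m, E)`. -/
abbrev St : Type := ℝ × ℝ × ℝ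

/-- The admissible set `G = {(ρ, m, E) : ρ > 0, E − m²/(2ρ) > 0}`. -/
def admG : Set St := {U | 0 < U.1 ∧ 0 < U.2.2 - U.2.1 ^ 2 / (2 * U.1)}

/-- The velocity `u = m/ρ`. -/
def vel (U : St) : ℝ := U.2.1 / U.1

/-- The pressure `p = (γ−1)(E − m²/(2ρ))`. -/
def press (γ : ℝ) (U : St) : ℝ := (γ - 1) * (U.2.2 - U.2.1 ^ 2 / (2 * U.1))

/-- The sound speed `√(γ p / ρ)`. -/
def sound (γ : ℝ) (U : St) : ℝ := Real.sqrt (γ * press γ U / U.1)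

/-- The specific internal energy `e = (E − m²/(2ρ))/ρ`. -/
def specE (U : St) : ℝ := (U.2.2 - U.2.1 ^ 2 / (2 * U.1)) / U.1

/-- The Euler flux `F(U) = (ρu, ρu² + p, (E+p)u)`. -/
def eulerF (γ : ℝ) (U : St) : St :=
  (U.1 * vel U, U.1 * vel U ^ 2 + press γ U, (U.2.2 + press γ U) * vel U)

/-- `α₋(U) = u − √(γp/ρ)`. -/
def alphaMinus (γ : ℝ) (U : St) : ℝ := vel U - sound γ U

/-- `α₊(U) = u + √(γp/ρ)`. -/
def alphaPlus (γ : ℝ) (U : St) : ℝ := vel U + sound γ U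

/-- `α_max(U) = |u| + √(γp/ρ)`. -/
def alphaMax (γ : ℝ) (U : St) : ℝ := |vel U| + sound γ U

/-- Left wave speed `S_L = min(α₋(U_L), α₋(U_R))`. -/
def SL (γ : ℝ) (UL UR : St) : ℝ := min (alphaMinus γ UL) (alphaMinus γ UR)

/-- Right wave speed `S_R = max(α₊(U_L), α₊(U_R))`. -/
def SR (γ : ℝ) (UL UR : St) : ℝ := max (alphaPlus γ UL) (alphaPlus γ UR)

/-- Middle wave speed `S_*`. -/
def Sstar (γ : ℝ) (UL UR : St) : ℝ :=
  (press γ UR - press γ UL + UL.1 * vel UL * (SL γ UL UR - vel UL)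
      - UR.1 * vel UR * (SR γ UL UR - vel UR)) /
    (UL.1 * (SL γ UL UR - vel UL) - UR.1 * (SR γ UL UR - vel UR))

/-- HLLC intermediate state
`U_{*i} = ρ_i (S_i − u_i)/(S_i − S_*) · (1, S_*, E_i/ρ_i + (S_* − u_i)(S_* + p_i/(ρ_i(S_i − u_i))))`. -/
def Ustar (γ : ℝ) (Si Sst : ℝ) (Ui : St) : St :=
  (Ui.1 * ((Si - vel Ui) / (Si - Sst))) •
    (((1 : ℝ), Sst,
      Ui.2.2 / Ui.1 + (Sst - vel Ui) * (Sst + press γ Ui / (Ui.1 * (Si - vel Ui)))) : St)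

/-- Intermediate flux `F_{*i} = F(U_i) + S_i (U_{*i} − U_i)`. -/
def Fstar (γ : ℝ) (Si Sst : ℝ) (Ui : St) : St :=
  eulerF γ Ui + Si • (Ustar γ Si Sst Ui - Ui)

/-- The HLLC numerical flux. -/
def Fhllc (γ : ℝ) (UL UR : St) : St :=
  if 0 ≤ SL γ UL UR then eulerF γ UL
  else if 0 ≤ Sstar γ UL UR then Fstar γ (SL γ UL UR) (Sstar γ UL UR) UL
  else if 0 ≤ SR γ UL UR then Fstar γ (SR γ UL UR) (Sstar γ UL UR) UR
  else eulerF γ UR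

end

/-!
The admissible set `G = {ρ > 0, m² < 2ρE}` is a convex cone. In each of the four regimes of the
HLLC flux, each one-sided update is a combination with nonnegative coefficients, not all zero, of
`U_L`, `U_R` and the intermediate states `U_{*L}`, `U_{*R}`: the consistency relation
`F_{*L} + S_* (U_{*R} - U_{*L}) = F_{*R}` trades one intermediate flux for the other, and the CFL
condition gives `-1 ≤ λ S_L` and `λ S_R ≤ 1`. The intermediate states are admissible because
`|S_i - u_i| ≥ c_i`. In the supersonic regimes the update contains `a U ± λ F(U)`, which is
admissible as soon as `a ≥ λ (c ∓ u)` since `F(U) = u U + p (0, 1, u)`. Finally `U ↦ ζ U`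
preserves `G` and `α_max`, so the scaled statement reduces to `ζᵢ = 1`.
-/

variable {γ : ℝ}

theorem mem_admG_iff {U : St} (hρ : 0 < U.1) : U ∈ admG ↔ U.2.1 ^ 2 < 2 * U.1 * U.2.2 := by
  rw [admG, Set.mem_ofPred_eq, sub_pos, div_lt_iff₀ (by positivity), mul_comm U.2.2]
  exact and_iff_right hρ

theorem add_mem_admG {U V : St} (hU : U ∈ admG) (hV : V ∈ admG) : U + V ∈ admG := by
  have hU' := (mem_admG_iff hU.1).1 hU
  have hV' := (mem_admG_iff hV.1).1 hV
  rw [mem_admG_iff (add_pos hU.1 hV.1)]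
  simp only [Prod.fst_add, Prod.snd_add]
  rw [← mul_lt_mul_iff_left₀ (mul_pos hU.1 hV.1)]
  nlinarith [sq_nonneg (U.2.1 * V.1 - V.2.1 * U.1), mul_lt_mul_of_pos_right hU' hV.1,
    mul_lt_mul_of_pos_right hV' hU.1, hU.1, hV.1]

theorem smul_mem_admG {a : ℝ} (ha : 0 < a) {U : St} (hU : U ∈ admG) : a • U ∈ admG := by
  have hU' := (mem_admG_iff hU.1).1 hU
  rw [mem_admG_iff (by simpa using mul_pos ha hU.1)]
  simp only [Prod.smul_fst, Prod.smul_snd, smul_eq_mul]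
  nlinarith [mul_lt_mul_of_pos_left hU' (mul_pos ha ha)]

theorem add_smul_mem_admG {U V : St} (hU : U ∈ admG) {a : ℝ} (ha : 0 ≤ a) (hV : V ∈ admG) :
    U + a • V ∈ admG := by
  rcases ha.eq_or_lt with rfl | ha
  · simpa using hU
  · exact add_mem_admG hU (smul_mem_admG ha hV)

theorem convex_admG : Convex ℝ admG :=
  convex_iff_forall_pos.2 fun _ hU _ hV _ _ ha hb _ ↦
    add_mem_admG (smul_mem_admG ha hU) (smul_mem_admG hb hV)

theorem press_pos (hγ : 1 < γ) {U : St} (hU : U ∈ admG) : 0 < press γ U :=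
  mul_pos (by linarith) hU.2

theorem sound_pos (hγ : 1 < γ) {U : St} (hU : U ∈ admG) : 0 < sound γ U :=
  Real.sqrt_pos.2 (div_pos (mul_pos (by linarith) (press_pos hγ hU)) hU.1)

theorem mul_sound_sq (hγ : 1 < γ) {U : St} (hU : U ∈ admG) :
    U.1 * sound γ U ^ 2 = γ * press γ U := by
  have hρ := hU.1
  rw [sound, Real.sq_sqrt (div_pos (mul_pos (by linarith) (press_pos hγ hU)) hρ).le]
  field_simp

theorem press_eq_mul_specE {U : St} (hρ : U.1 ≠ 0) : press γ U = (γ - 1) * U.1 * specE U := by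
  rw [press, specE]
  field_simp

theorem two_mul_mul_press {U : St} (hρ : U.1 ≠ 0) :
    2 * U.1 * press γ U = (γ - 1) * (2 * U.1 * U.2.2 - U.2.1 ^ 2) := by
  rw [press]
  field_simp

theorem eulerF_eq {U : St} (hρ : U.1 ≠ 0) :
    eulerF γ U = vel U • U + press γ U • ((0, 1, vel U) : St) := by
  simp only [eulerF, vel, Prod.ext_iff, Prod.smul_mk, Prod.smul_fst, Prod.smul_snd, smul_eq_mul,
    Prod.fst_add, Prod.snd_add]
  refine ⟨by ring, by field_simp, by ring⟩

theorem smul_add_smul_pressureFlux_mem_admG (hγ : 1 < γ) {U : St} (hU : U ∈ admG) {a μ : ℝ}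
    (hμ : μ ≠ 0) (h : |μ| * sound γ U ≤ a) :
    a • U + (μ * press γ U) • ((0, 1, vel U) : St) ∈ admG := by
  have hρ := hU.1
  have hp := press_pos hγ hU
  have hc := sound_pos hγ hU
  have ha : 0 < a := (mul_pos (abs_pos.2 hμ) hc).trans_le h
  have hsq : μ ^ 2 * (γ * press γ U) ≤ a ^ 2 * U.1 := by
    rw [← mul_sound_sq hγ hU, ← sq_abs μ]
    nlinarith [pow_le_pow_left₀ (by positivity) h 2]
  have hT := two_mul_mul_press (γ := γ) hρ.ne'
  rw [mem_admG_iff (by simpa using mul_pos ha hρ)]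
  simp only [vel, Prod.smul_mk, Prod.smul_fst, Prod.smul_snd, smul_eq_mul, Prod.fst_add,
    Prod.snd_add, mul_zero, mul_one, add_zero]
  have hgap : (μ * press γ U) ^ 2 < a ^ 2 * (2 * U.1 * U.2.2 - U.2.1 ^ 2) := by
    refine lt_of_mul_lt_mul_left ?_ (sub_pos.2 hγ).le
    calc (γ - 1) * (μ * press γ U) ^ 2 < 2 * γ * (μ * press γ U) ^ 2 := by
          gcongr
          linarith
      _ = 2 * press γ U * (μ ^ 2 * (γ * press γ U)) := by ring
      _ ≤ 2 * press γ U * (a ^ 2 * U.1) := by gcongr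
      _ = (γ - 1) * (a ^ 2 * (2 * U.1 * U.2.2 - U.2.1 ^ 2)) := by linear_combination a ^ 2 * hT
  have hexpand : 2 * (a * U.1) * (a * U.2.2 + μ * press γ U * (U.2.1 / U.1))
        - (a * U.2.1 + μ * press γ U) ^ 2
      = a ^ 2 * (2 * U.1 * U.2.2 - U.2.1 ^ 2) - (μ * press γ U) ^ 2 := by
    field_simp
    ring
  linarith

theorem smul_add_smul_eulerF_mem_admG (hγ : 1 < γ) {U : St} (hU : U ∈ admG) {a μ : ℝ}
    (hμ : μ ≠ 0) (h : |μ| * sound γ U ≤ a + μ * vel U) : a • U + μ • eulerF γ U ∈ admG := by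
  convert smul_add_smul_pressureFlux_mem_admG hγ hU hμ h using 1
  rw [eulerF_eq hU.1.ne']
  module

theorem mul_alphaPlus_le_one {lam : ℝ} (hlam : 0 ≤ lam) {U : St} (h : lam * alphaMax γ U ≤ 1) :
    lam * alphaPlus γ U ≤ 1 :=
  (mul_le_mul_of_nonneg_left (add_le_add_left (le_abs_self _) _) hlam).trans h

theorem neg_one_le_mul_alphaMinus {lam : ℝ} (hlam : 0 ≤ lam) {U : St}
    (h : lam * alphaMax γ U ≤ 1) : -1 ≤ lam * alphaMinus γ U := by
  have := mul_le_mul_of_nonneg_left (add_le_add_left (neg_le_abs (vel U)) (sound γ U)) hlam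
  rw [alphaMax, add_comm] at h
  rw [alphaMinus]
  linarith

theorem upwind_right_update_mem_admG (hγ : 1 < γ) {UL UR : St} (hUL : UL ∈ admG)
    (hUR : UR ∈ admG) {lam : ℝ} (hlam : 0 < lam) (hR : lam * alphaPlus γ UR ≤ 1)
    (hL : 0 ≤ alphaMinus γ UL) : UR - lam • (eulerF γ UR - eulerF γ UL) ∈ admG := by
  have hW : UR - lam • (eulerF γ UR - eulerF γ UL)
      = ((1 : ℝ) • UR + (-lam) • eulerF γ UR) + ((0 : ℝ) • UL + lam • eulerF γ UL) := by module
  rw [alphaPlus] at hR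
  rw [alphaMinus] at hL
  rw [hW]
  refine add_mem_admG (smul_add_smul_eulerF_mem_admG hγ hUR (neg_ne_zero.2 hlam.ne') ?_)
    (smul_add_smul_eulerF_mem_admG hγ hUL hlam.ne' ?_)
  · rw [abs_neg, abs_of_pos hlam]; linarith
  · rw [abs_of_pos hlam]; nlinarith

theorem upwind_left_update_mem_admG (hγ : 1 < γ) {UL UR : St} (hUL : UL ∈ admG)
    (hUR : UR ∈ admG) {lam : ℝ} (hlam : 0 < lam) (hL : -1 ≤ lam * alphaMinus γ UL)
    (hR : alphaPlus γ UR ≤ 0) : UL - lam • (eulerF γ UR - eulerF γ UL) ∈ admG := by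
  have hW : UL - lam • (eulerF γ UR - eulerF γ UL)
      = ((1 : ℝ) • UL + lam • eulerF γ UL) + ((0 : ℝ) • UR + (-lam) • eulerF γ UR) := by module
  rw [alphaMinus] at hL
  rw [alphaPlus] at hR
  rw [hW]
  refine add_mem_admG (smul_add_smul_eulerF_mem_admG hγ hUL hlam.ne' ?_)
    (smul_add_smul_eulerF_mem_admG hγ hUR (neg_ne_zero.2 hlam.ne') ?_)
  · rw [abs_of_pos hlam]; linarith
  · rw [abs_neg, abs_of_pos hlam]; nlinarith

theorem mul_SR_le_one {lam : ℝ} (hlam : 0 ≤ lam) {UL UR : St} (hL : lam * alphaMax γ UL ≤ 1)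
    (hR : lam * alphaMax γ UR ≤ 1) : lam * SR γ UL UR ≤ 1 := by
  rw [SR, mul_max_of_nonneg _ _ hlam]
  exact max_le (mul_alphaPlus_le_one hlam hL) (mul_alphaPlus_le_one hlam hR)

theorem neg_one_le_mul_SL {lam : ℝ} (hlam : 0 ≤ lam) {UL UR : St}
    (hL : lam * alphaMax γ UL ≤ 1) (hR : lam * alphaMax γ UR ≤ 1) : -1 ≤ lam * SL γ UL UR := by
  rw [SL, mul_min_of_nonneg _ _ hlam]
  exact le_min (neg_one_le_mul_alphaMinus hlam hL) (neg_one_le_mul_alphaMinus hlam hR)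

theorem hllc_middle_speed_inequalities {ρL ρR pL pR cL cR uL uR sL sR : ℝ} (hγ : 1 < γ)
    (hρL : 0 < ρL) (hρR : 0 < ρR) (hcL : 0 < cL) (hcR : 0 < cR)
    (hkL : ρL * cL ^ 2 = γ * pL) (hkR : ρR * cR ^ 2 = γ * pR)
    (h1 : sL ≤ uL - cL) (h2 : sL ≤ uR - cR) (h3 : uL + cL ≤ sR) (h4 : uR + cR ≤ sR) :
    ρL * (sL - uL) - ρR * (sR - uR) < 0 ∧
    pR - pL + ρL * uL * (sL - uL) - ρR * uR * (sR - uR)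
      < sL * (ρL * (sL - uL) - ρR * (sR - uR)) ∧
    sR * (ρL * (sL - uL) - ρR * (sR - uR))
      < pR - pL + ρL * uL * (sL - uL) - ρR * uR * (sR - uR) := by
  have hpL : 0 < pL := pos_of_mul_pos_right (a := γ) (by rw [← hkL]; positivity) (by linarith)
  have hpR : 0 < pR := pos_of_mul_pos_right (a := γ) (by rw [← hkR]; positivity) (by linarith)
  refine ⟨by nlinarith [mul_pos hρL hcL, mul_pos hρR hcR], ?_, ?_⟩
  · nlinarith [mul_nonneg (mul_nonneg hρL.le (sub_nonneg.2 h1)) (by linarith : 0 ≤ uL - sL + cL),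
      mul_nonneg (mul_nonneg hρR.le (sub_nonneg.2 h2)) (by linarith : 0 ≤ sR - uR),
      mul_nonneg (mul_nonneg hρR.le hcR.le) (sub_nonneg.2 h4)]
  · nlinarith [mul_nonneg (mul_nonneg hρL.le (sub_nonneg.2 h1)) (by linarith : 0 ≤ sR - uL),
      mul_nonneg (mul_nonneg hρL.le hcL.le) (sub_nonneg.2 h3),
      mul_nonneg (mul_nonneg hρR.le (sub_nonneg.2 h4)) (by linarith : 0 ≤ sR - uR + cR)]

theorem Ustar_mem_admG (hγ : 1 < γ) {U : St} (hU : U ∈ admG) {S Sst : ℝ}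
    (hsgn : 0 < (S - vel U) * (S - Sst)) (hc : sound γ U ≤ |S - vel U|) :
    Ustar γ S Sst U ∈ admG := by
  have hρ := hU.1
  have he : 0 < specE U := div_pos hU.2 hρ
  have hw : S - vel U ≠ 0 := left_ne_zero_of_mul hsgn.ne'
  have hp := press_eq_mul_specE (γ := γ) hρ.ne'
  have hsq : γ * press γ U ≤ U.1 * (S - vel U) ^ 2 := by
    rw [← mul_sound_sq hγ hU, ← sq_abs (S - vel U)]
    gcongr
    exact (sound_pos hγ hU).le
  refine smul_mem_admG (mul_pos hρ (div_pos_iff.2 (mul_pos_iff.1 hsgn))) ?_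
  rw [mem_admG_iff one_pos]
  dsimp only
  have hE : U.2.2 / U.1 = specE U + vel U ^ 2 / 2 := by
    rw [specE, vel]
    field_simp
    ring
  set q := press γ U / (U.1 * (S - vel U))
  -- with `e = specE U`, twice the last entry minus `S_*²` is `(S_* - u + q)² + 2 e - q²`,
  -- and `q² ≤ (γ - 1) e / γ` because `ρ (S - u)² ≥ γ p`
  have hq : q ^ 2 < 2 * specE U := by
    have hX : 0 < U.1 ^ 2 * specE U * (S - vel U) ^ 2 := by positivity
    have hγp : γ * press γ U ^ 2 ≤ (γ - 1) * (U.1 ^ 2 * specE U * (S - vel U) ^ 2) :=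
      calc γ * press γ U ^ 2 = (γ - 1) * U.1 * specE U * (γ * press γ U) := by
            linear_combination (γ * press γ U) * hp
        _ ≤ (γ - 1) * U.1 * specE U * (U.1 * (S - vel U) ^ 2) :=
            mul_le_mul_of_nonneg_left hsq (mul_pos (mul_pos (sub_pos.2 hγ) hρ) he).le
        _ = (γ - 1) * (U.1 ^ 2 * specE U * (S - vel U) ^ 2) := by ring
    rw [div_pow, div_lt_iff₀ (by positivity)]
    refine lt_of_mul_lt_mul_left ?_ (by linarith : (0 : ℝ) ≤ γ)
    nlinarith
  rw [hE]
  nlinarith [sq_nonneg (Sst - vel U + q)]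

theorem Fstar_eq {U : St} (hρ : U.1 ≠ 0) {S Sst : ℝ} (hd : S - Sst ≠ 0) (hw : S - vel U ≠ 0) :
    Fstar γ S Sst U = Sst • Ustar γ S Sst U +
      (press γ U + U.1 * (vel U - S) * (vel U - Sst)) • ((0, 1, Sst) : St) := by
  have hm : U.2.1 = vel U * U.1 := by rw [vel]; field_simp
  simp only [Fstar, Ustar, eulerF, Prod.ext_iff, Prod.smul_mk, Prod.smul_fst, Prod.smul_snd,
    smul_eq_mul, Prod.fst_add, Prod.snd_add, Prod.fst_sub, Prod.snd_sub]
  refine ⟨?_, ?_, ?_⟩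
  · field_simp; ring
  · rw [hm]; field_simp; ring
  · field_simp; ring

/-- The HLLC consistency relation: `S_*` is chosen so that the two intermediate pressures
`p_i + ρ_i (u_i - S_i)(u_i - S_*)` agree. -/
theorem Fstar_add_smul_sub_Ustar {UL UR : St} (hρL : UL.1 ≠ 0) (hρR : UR.1 ≠ 0) {sL sR Sst : ℝ}
    (hdL : sL - Sst ≠ 0) (hdR : sR - Sst ≠ 0) (hwL : sL - vel UL ≠ 0) (hwR : sR - vel UR ≠ 0)
    (hSst : (UL.1 * (sL - vel UL) - UR.1 * (sR - vel UR)) * Sst =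
      press γ UR - press γ UL + UL.1 * vel UL * (sL - vel UL) - UR.1 * vel UR * (sR - vel UR)) :
    Fstar γ sL Sst UL + Sst • (Ustar γ sR Sst UR - Ustar γ sL Sst UL) = Fstar γ sR Sst UR := by
  have hpstar : press γ UL + UL.1 * (vel UL - sL) * (vel UL - Sst)
      = press γ UR + UR.1 * (vel UR - sR) * (vel UR - Sst) := by
    linear_combination hSst
  rw [Fstar_eq hρL hdL hwL, Fstar_eq hρR hdR hwR, hpstar]
  module

section HLLC

variable {UL UR : St}

theorem hllc_middle_speed_inequalities_of_mem (hγ : 1 < γ) (hUL : UL ∈ admG) (hUR : UR ∈ admG) :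
    UL.1 * (SL γ UL UR - vel UL) - UR.1 * (SR γ UL UR - vel UR) < 0 ∧
    press γ UR - press γ UL + UL.1 * vel UL * (SL γ UL UR - vel UL)
        - UR.1 * vel UR * (SR γ UL UR - vel UR)
      < SL γ UL UR * (UL.1 * (SL γ UL UR - vel UL) - UR.1 * (SR γ UL UR - vel UR)) ∧
    SR γ UL UR * (UL.1 * (SL γ UL UR - vel UL) - UR.1 * (SR γ UL UR - vel UR))
      < press γ UR - press γ UL + UL.1 * vel UL * (SL γ UL UR - vel UL)
        - UR.1 * vel UR * (SR γ UL UR - vel UR) :=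
  hllc_middle_speed_inequalities hγ hUL.1 hUR.1 (sound_pos hγ hUL) (sound_pos hγ hUR)
    (mul_sound_sq hγ hUL) (mul_sound_sq hγ hUR) (min_le_left _ _) (min_le_right _ _)
    (le_max_left _ _) (le_max_right _ _)

theorem SL_lt_Sstar (hγ : 1 < γ) (hUL : UL ∈ admG) (hUR : UR ∈ admG) :
    SL γ UL UR < Sstar γ UL UR :=
  have h := hllc_middle_speed_inequalities_of_mem hγ hUL hUR
  (lt_div_iff_of_neg h.1).2 h.2.1

theorem Sstar_lt_SR (hγ : 1 < γ) (hUL : UL ∈ admG) (hUR : UR ∈ admG) :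
    Sstar γ UL UR < SR γ UL UR :=
  have h := hllc_middle_speed_inequalities_of_mem hγ hUL hUR
  (div_lt_iff_of_neg h.1).2 h.2.2

theorem denominator_mul_Sstar (hγ : 1 < γ) (hUL : UL ∈ admG) (hUR : UR ∈ admG) :
    (UL.1 * (SL γ UL UR - vel UL) - UR.1 * (SR γ UL UR - vel UR)) * Sstar γ UL UR =
      press γ UR - press γ UL + UL.1 * vel UL * (SL γ UL UR - vel UL)
        - UR.1 * vel UR * (SR γ UL UR - vel UR) :=
  mul_div_cancel₀ _ (hllc_middle_speed_inequalities_of_mem hγ hUL hUR).1.ne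

theorem Ustar_SL_mem_admG (hγ : 1 < γ) (hUL : UL ∈ admG) (hUR : UR ∈ admG) :
    Ustar γ (SL γ UL UR) (Sstar γ UL UR) UL ∈ admG := by
  have h : SL γ UL UR ≤ vel UL - sound γ UL := min_le_left _ _
  have hc := sound_pos hγ hUL
  refine Ustar_mem_admG hγ hUL (mul_pos_of_neg_of_neg (by linarith)
    (sub_neg.2 (SL_lt_Sstar hγ hUL hUR))) ?_
  rw [abs_of_neg (by linarith)]
  linarith

theorem Ustar_SR_mem_admG (hγ : 1 < γ) (hUL : UL ∈ admG) (hUR : UR ∈ admG) :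
    Ustar γ (SR γ UL UR) (Sstar γ UL UR) UR ∈ admG := by
  have h : vel UR + sound γ UR ≤ SR γ UL UR := le_max_right _ _
  have hc := sound_pos hγ hUR
  refine Ustar_mem_admG hγ hUR (mul_pos (by linarith)
    (sub_pos.2 (Sstar_lt_SR hγ hUL hUR))) ?_
  rw [abs_of_pos (by linarith)]
  linarith

theorem hllc_consistency (hγ : 1 < γ) (hUL : UL ∈ admG) (hUR : UR ∈ admG) :
    Fstar γ (SL γ UL UR) (Sstar γ UL UR) UL
        + Sstar γ UL UR • (Ustar γ (SR γ UL UR) (Sstar γ UL UR) UR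
          - Ustar γ (SL γ UL UR) (Sstar γ UL UR) UL)
      = Fstar γ (SR γ UL UR) (Sstar γ UL UR) UR := by
  have hL : SL γ UL UR ≤ vel UL - sound γ UL := min_le_left _ _
  have hR : vel UR + sound γ UR ≤ SR γ UL UR := le_max_right _ _
  have hcL := sound_pos hγ hUL
  have hcR := sound_pos hγ hUR
  exact Fstar_add_smul_sub_Ustar hUL.1.ne' hUR.1.ne' (sub_ne_zero.2 (SL_lt_Sstar hγ hUL hUR).ne)
    (sub_ne_zero.2 (Sstar_lt_SR hγ hUL hUR).ne') (by linarith) (by linarith)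
    (denominator_mul_Sstar hγ hUL hUR)

theorem hllc_right_update_mem_admG (hγ : 1 < γ) (hUL : UL ∈ admG) (hUR : UR ∈ admG) {lam : ℝ}
    (hlam : 0 < lam) (hL : lam * alphaMax γ UL ≤ 1) (hR : lam * alphaMax γ UR ≤ 1) :
    UR - lam • (eulerF γ UR - Fhllc γ UL UR) ∈ admG := by
  have hSR := mul_SR_le_one hlam.le hL hR
  have hsR := Sstar_lt_SR hγ hUL hUR
  have hcross := hllc_consistency hγ hUL hUR
  have hUsL := Ustar_SL_mem_admG hγ hUL hUR
  have hUsR := Ustar_SR_mem_admG hγ hUL hUR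
  rw [Fhllc]
  set s := Sstar γ UL UR
  set sR := SR γ UL UR
  split_ifs with h₁ h₂ h₃
  · exact upwind_right_update_mem_admG hγ hUL hUR hlam (mul_alphaPlus_le_one hlam.le hR)
      (h₁.trans (min_le_left _ _))
  · rw [eq_sub_of_add_eq hcross]
    have hW : UR - lam • (eulerF γ UR - (Fstar γ sR s UR - s • (Ustar γ sR s UR
          - Ustar γ (SL γ UL UR) s UL)))
        = ((lam * (sR - s)) • Ustar γ sR s UR + (1 - lam * sR) • UR)
          + (lam * s) • Ustar γ (SL γ UL UR) s UL := by
      unfold Fstar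
      module
    rw [hW]
    exact add_smul_mem_admG (add_smul_mem_admG (smul_mem_admG (by nlinarith) hUsR)
      (by linarith) hUR) (mul_nonneg hlam.le h₂) hUsL
  · have hW : UR - lam • (eulerF γ UR - Fstar γ sR s UR)
        = UR + (lam * sR) • (Ustar γ sR s UR - UR) := by
      unfold Fstar
      module
    rw [hW]
    exact convex_admG.add_smul_sub_mem hUR hUsR ⟨mul_nonneg hlam.le h₃, hSR⟩
  · rw [sub_self, smul_zero, sub_zero]
    exact hUR

theorem hllc_left_update_mem_admG (hγ : 1 < γ) (hUL : UL ∈ admG) (hUR : UR ∈ admG) {lam : ℝ}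
    (hlam : 0 < lam) (hL : lam * alphaMax γ UL ≤ 1) (hR : lam * alphaMax γ UR ≤ 1) :
    UL - lam • (Fhllc γ UL UR - eulerF γ UL) ∈ admG := by
  have hSL := neg_one_le_mul_SL hlam.le hL hR
  have hsL := SL_lt_Sstar hγ hUL hUR
  have hcross := hllc_consistency hγ hUL hUR
  have hUsL := Ustar_SL_mem_admG hγ hUL hUR
  have hUsR := Ustar_SR_mem_admG hγ hUL hUR
  rw [Fhllc]
  set sL := SL γ UL UR
  set s := Sstar γ UL UR
  split_ifs with h₁ h₂ h₃
  · rw [sub_self, smul_zero, sub_zero]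
    exact hUL
  · have hW : UL - lam • (Fstar γ sL s UL - eulerF γ UL)
        = UL + (-(lam * sL)) • (Ustar γ sL s UL - UL) := by
      unfold Fstar
      module
    rw [hW]
    exact convex_admG.add_smul_sub_mem hUL hUsL ⟨by nlinarith, by linarith⟩
  · rw [← hcross]
    have hW : UL - lam • (Fstar γ sL s UL + s • (Ustar γ (SR γ UL UR) s UR - Ustar γ sL s UL)
          - eulerF γ UL)
        = ((lam * (s - sL)) • Ustar γ sL s UL + (1 + lam * sL) • UL)
          + (-(lam * s)) • Ustar γ (SR γ UL UR) s UR := by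
      unfold Fstar
      module
    rw [hW]
    exact add_smul_mem_admG (add_smul_mem_admG (smul_mem_admG (by nlinarith) hUsL)
      (by linarith) hUL) (by nlinarith) hUsR
  · exact upwind_left_update_mem_admG hγ hUL hUR hlam (neg_one_le_mul_alphaMinus hlam.le hL)
      ((le_max_right _ _).trans (not_le.1 h₃).le)

end HLLC

theorem vel_smul {a : ℝ} (ha : a ≠ 0) (U : St) : vel (a • U) = vel U :=
  mul_div_mul_left _ _ ha

theorem press_smul (a : ℝ) (U : St) : press γ (a • U) = a * press γ U := by
  simp only [press, Prod.smul_fst, Prod.smul_snd, smul_eq_mul]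
  rw [mul_pow, mul_left_comm 2 a, mul_div_mul_comm, sq a, mul_self_div_self]
  ring

theorem sound_smul {a : ℝ} (ha : a ≠ 0) (U : St) : sound γ (a • U) = sound γ U := by
  rw [sound, sound, press_smul, Prod.smul_fst, smul_eq_mul, mul_left_comm,
    mul_div_mul_left _ _ ha]

theorem alphaMax_smul {a : ℝ} (ha : a ≠ 0) (U : St) : alphaMax γ (a • U) = alphaMax γ U := by
  rw [alphaMax, alphaMax, vel_smul ha, sound_smul ha]

/-- Lemma 2.10: scaled one-sided HLLC positivity. -/
theorem hllc_scaled_one_sided_positivity (γ : ℝ) (hγ : 1 < γ)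
    (ζ₁ ζ₂ ζ₃ ζ₄ : ℝ) (hζ₁ : 0 < ζ₁) (hζ₂ : 0 < ζ₂) (hζ₃ : 0 < ζ₃) (hζ₄ : 0 < ζ₄)
    (U₀ U₁ : St) (hU₀ : U₀ ∈ admG) (hU₁ : U₁ ∈ admG)
    (lam : ℝ) (hlam : 0 < lam)
    (hcfl : lam * max (alphaMax γ U₀) (alphaMax γ U₁) ≤ 1) :
    ζ₂ • U₁ - lam • (eulerF γ (ζ₂ • U₁) - Fhllc γ (ζ₁ • U₀) (ζ₂ • U₁)) ∈ admG ∧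
      ζ₃ • U₀ - lam • (Fhllc γ (ζ₃ • U₀) (ζ₄ • U₁) - eulerF γ (ζ₃ • U₀)) ∈ admG := by
  have h₀ : lam * alphaMax γ U₀ ≤ 1 :=
    (mul_le_mul_of_nonneg_left (le_max_left _ _) hlam.le).trans hcfl
  have h₁ : lam * alphaMax γ U₁ ≤ 1 :=
    (mul_le_mul_of_nonneg_left (le_max_right _ _) hlam.le).trans hcfl
  constructor
  · refine hllc_right_update_mem_admG hγ (smul_mem_admG hζ₁ hU₀) (smul_mem_admG hζ₂ hU₁) hlam
      ?_ ?_ <;> rwa [alphaMax_smul (by positivity)]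
  · refine hllc_left_update_mem_admG hγ (smul_mem_admG hζ₃ hU₀) (smul_mem_admG hζ₄ hU₁) hlam
      ?_ ?_ <;> rwa [alphaMax_smul (by positivity)]
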